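/- Let S_1,…,S_m be admissible sets of signed vectors in ℝ^n, let T ∈ AdS_n, and suppose the polytope P_T := Δ⁰_{S_1∩T} + ⋯ + Δ⁰_{S_m∩T} is n-dimensional. Let Π := conv(E_1) + ⋯ + conv(E_m) be a fine mixed cell of P_T, that is, each E_i is a nonempty subset of {0} ∪ (S_i ∩ T), Σ_{i=1}^m (|E_i| − 1) = n, and Π is n-dimensional. Then for every nonzero integer vector y ∈ ℤ^n, the interiors of Π and y + Π are disjoint. -/

import Mathlib

open Pointwise

noncomputable section

/-- The signed standard basis vector of `ℝ^n`: `(i, true) ↦ e i`, `(i, false) ↦ -e i`. -/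
def sgnVec (n : ℕ) (p : Fin n × Bool) : Fin n → ℝ :=
  if p.2 then Pi.single p.1 1 else -Pi.single p.1 1

/-- A set of signed vectors is admissible if it is nonempty and contains at most one of
`e i`, `-e i` for each `i`. -/
def Adm (n : ℕ) (S : Finset (Fin n × Bool)) : Prop :=
  S.Nonempty ∧ ∀ i : Fin n, ¬((i, true) ∈ S ∧ (i, false) ∈ S)

/-- `AdS_n`: admissible sets of size `n` (exactly one of `±e i` for each `i`). -/
def AdSn (n : ℕ) (T : Finset (Fin n × Bool)) : Prop :=
  T.card = n ∧ Adm n T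

/-- The simplex `Δ⁰_S := conv({0} ∪ S)`. -/
def simp0 (n : ℕ) (S : Finset (Fin n × Bool)) : Set (Fin n → ℝ) :=
  convexHull ℝ ({0} ∪ sgnVec n '' ↑S)

/-- The lattice points `ℤ^n ⊆ ℝ^n`. -/
def latt (n : ℕ) : Set (Fin n → ℝ) := {x | ∀ j, ∃ z : ℤ, x j = (z : ℝ)}

/-- Minkowski difference `A − B := {x : x + B ⊆ A}`. -/
def mdiff {n : ℕ} (A B : Set (Fin n → ℝ)) : Set (Fin n → ℝ) :=
  {x | ∀ b ∈ B, x + b ∈ A}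

/-- Vertices of the summands of fine mixed cells: `none ↦ 0`, `some p ↦ ±e_i`. -/
def vec0 (n : ℕ) : Option (Fin n × Bool) → (Fin n → ℝ)
  | none => 0
  | some p => sgnVec n p

/-!
Label the vertex `0` of the cell by the root `none` and a vertex `±e_j ∈ T` by `some (j, ±)`;
the labels of `E i` form a hyperedge on the `n + 1` labels. For a set `B` of non-root labels,
the functional `x ↦ ⟪∑_{p ∈ B} p, x⟫` is `1` on the vertices labelled in `B` and `0` on the
others (the vectors of `T` are orthonormal), so on `Π` its values lie in an interval whose
length is the number of hyperedges that `B` cuts. If `x` and `x - z` both lie in the interior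
of `Π`, this length is therefore positive for every nonempty `B`, making the hypergraph
connected, and hence, with `∑ (|E i| - 1) = n`, a hypertree. Moreover the integer
`⟪∑_{p ∈ B} p, z⟫` is then strictly smaller than that length in absolute value, so it vanishes
whenever `B` cuts at most one hyperedge. Stripping leaves of the hypertree one vertex at a time
shows that these sums determine every coordinate of `z`, so `z = 0`.
-/

open Finset Matrix

section Hypertree

variable {ι J : Type*} [DecidableEq J]

def Cuts (B e : Finset J) : Prop := (e ∩ B).Nonempty ∧ ¬e ⊆ B

instance (B e : Finset J) : Decidable (Cuts B e) := inferInstanceAs (Decidable (_ ∧ _))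

lemma Cuts.two_le_card {B e : Finset J} (h : Cuts B e) : 2 ≤ #e := by
  obtain ⟨⟨a, ha⟩, hsub⟩ := h
  obtain ⟨b, hb, hbB⟩ := not_subset.mp hsub
  rw [mem_inter] at ha
  exact one_lt_card.mpr ⟨a, ha.1, b, hb, fun hab => hbB (hab ▸ ha.2)⟩

lemma cuts_insert_iff {B e : Finset J} {v : J} (hv : v ∉ e) : Cuts (insert v B) e ↔ Cuts B e := by
  rw [Cuts, Cuts, inter_insert_of_notMem hv, subset_insert_iff_of_notMem hv]

lemma Cuts.erase {B e : Finset J} {v : J} (h : Cuts B e) (hv : v ∉ B) (hsub : ¬e.erase v ⊆ B) :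
    Cuts B (e.erase v) := by
  obtain ⟨a, ha⟩ := h.1
  rw [mem_inter] at ha
  exact ⟨⟨a, mem_inter.mpr ⟨mem_erase.mpr ⟨fun hav => hv (hav ▸ ha.2), ha.1⟩, ha.2⟩⟩, hsub⟩

lemma exists_cuts_imp_cuts_erase {V : ι → Finset J} {v : J} {i₀ : ι}
    (hleaf : ∀ i ≠ i₀, 2 ≤ #(V i) → v ∉ V i) {B : Finset J} (hvB : v ∉ B) :
    ∃ B₀, (B₀ = B ∨ B₀ = insert v B) ∧ ∀ i, Cuts B₀ (V i) → Cuts B ((V i).erase v) := by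
  have hother : ∀ B₀, ∀ i ≠ i₀, Cuts B₀ (V i) → (V i).erase v = V i := fun B₀ i hi hcut =>
    erase_eq_of_notMem (hleaf i hi hcut.two_le_card)
  by_cases hsub : (V i₀).erase v ⊆ B
  · refine ⟨insert v B, Or.inr rfl, fun i hcut => ?_⟩
    obtain rfl | hi := eq_or_ne i i₀
    · exact absurd (subset_insert_iff.mpr hsub) hcut.2
    · rw [hother _ i hi hcut]
      exact (cuts_insert_iff (hleaf i hi hcut.two_le_card)).mp hcut
  · refine ⟨B, Or.inl rfl, fun i hcut => ?_⟩
    obtain rfl | hi := eq_or_ne i i₀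
    · exact hcut.erase hvB hsub
    · rwa [hother _ i hi hcut]

variable [Fintype ι]

structure IsRootedHypertree (U : Finset J) (r : J) (V : ι → Finset J) : Prop where
  root_mem : r ∈ U
  subset : ∀ i, V i ⊆ U
  sum_card_sub_one : ∑ i, (#(V i) - 1) = #U - 1
  exists_cuts : ∀ B ⊆ U.erase r, B.Nonempty → ∃ i, Cuts B (V i)

namespace IsRootedHypertree

variable {U : Finset J} {r : J} {V : ι → Finset J}

lemma exists_mem_two_le_card (h : IsRootedHypertree U r V) (hU : (U.erase r).Nonempty)
    {v : J} (hv : v ∈ U) : ∃ i, v ∈ V i ∧ 2 ≤ #(V i) := by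
  obtain rfl | hvr := eq_or_ne v r
  · obtain ⟨i, hcut⟩ := h.exists_cuts _ subset_rfl hU
    obtain ⟨w, hw, hwB⟩ := not_subset.mp hcut.2
    obtain rfl : w = v := by
      by_contra hwr
      exact hwB (mem_erase.mpr ⟨hwr, h.subset i hw⟩)
    exact ⟨i, hw, hcut.two_le_card⟩
  · obtain ⟨i, hcut⟩ := h.exists_cuts {v} (by simpa [hvr] using hv) (singleton_nonempty v)
    obtain ⟨w, hw⟩ := hcut.1
    rw [mem_inter, mem_singleton] at hw
    exact ⟨i, hw.2 ▸ hw.1, hcut.two_le_card⟩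

lemma sum_filter_card_sub_one (h : IsRootedHypertree U r V) :
    ∑ i with 2 ≤ #(V i), (#(V i) - 1) = #U - 1 := by
  rw [sum_filter_of_ne fun i _ hi => by omega, h.sum_card_sub_one]

lemma card_filter_two_le_card_le (h : IsRootedHypertree U r V) :
    #{i | 2 ≤ #(V i)} ≤ #U - 1 := by
  rw [← h.sum_filter_card_sub_one, card_eq_sum_ones]
  exact sum_le_sum fun i hi => by have := (mem_filter.mp hi).2; omega

lemma sum_card_filter_mem (h : IsRootedHypertree U r V) :
    ∑ v ∈ U, #{i | 2 ≤ #(V i) ∧ v ∈ V i} = #U - 1 + #{i | 2 ≤ #(V i)} := by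
  set K : Finset ι := {i | 2 ≤ #(V i)}
  have hdouble : ∑ v ∈ U, #{i | 2 ≤ #(V i) ∧ v ∈ V i} = ∑ i ∈ K, #(V i) := by
    simp_rw [← filter_filter]
    rw [show ∑ v ∈ U, #(K.filter (v ∈ V ·)) = ∑ v ∈ U, #(K.bipartiteAbove (· ∈ V ·) v) from rfl,
      sum_card_bipartiteAbove_eq_sum_card_bipartiteBelow]
    refine sum_congr rfl fun i _ => ?_
    rw [bipartiteBelow, filter_mem_eq_inter, inter_eq_right.mpr (h.subset i)]
  rw [hdouble, ← h.sum_filter_card_sub_one, card_eq_sum_ones K, ← sum_add_distrib]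
  exact sum_congr rfl fun i hi => by have := (mem_filter.mp hi).2; omega

/- If every non-root vertex lay on two of the `k ≤ #U - 1` edges with at least two vertices,
the degree sum `#U - 1 + k` over these edges would be at least `1 + 2 * (#U - 1)`. -/
lemma exists_leaf (h : IsRootedHypertree U r V) (hU : (U.erase r).Nonempty) :
    ∃ v ∈ U.erase r, ∃ i₀, v ∈ V i₀ ∧ 2 ≤ #(V i₀) ∧ ∀ i ≠ i₀, 2 ≤ #(V i) → v ∉ V i := by
  by_contra hno
  push Not at hno
  have hdeg_two : ∀ v ∈ U.erase r, 2 ≤ #{i | 2 ≤ #(V i) ∧ v ∈ V i} := by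
    intro v hv
    obtain ⟨i₀, hvi₀, hi₀⟩ := h.exists_mem_two_le_card hU (mem_of_mem_erase hv)
    obtain ⟨i, hne, hi, hvi⟩ := hno v hv i₀ hvi₀ hi₀
    exact one_lt_card.mpr ⟨i₀, by simp [hvi₀, hi₀], i, by simp [hvi, hi], hne.symm⟩
  have hdeg_root : 1 ≤ #{i | 2 ≤ #(V i) ∧ r ∈ V i} := by
    obtain ⟨i, hri, hi⟩ := h.exists_mem_two_le_card hU h.root_mem
    exact card_pos.mpr ⟨i, by simp [hri, hi]⟩
  have hlower : 1 + 2 * (#U - 1) ≤ ∑ v ∈ U, #{i | 2 ≤ #(V i) ∧ v ∈ V i} := by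
    rw [← add_sum_erase U _ h.root_mem, ← card_erase_of_mem h.root_mem, mul_comm,
      ← smul_eq_mul, ← sum_const]
    exact add_le_add hdeg_root (sum_le_sum hdeg_two)
  have := h.sum_card_filter_mem
  have := h.card_filter_two_le_card_le
  have := card_pos.mpr ⟨r, h.root_mem⟩
  omega

lemma erase_leaf (h : IsRootedHypertree U r V) {v : J} {i₀ : ι} (hv : v ∈ U.erase r)
    (hvi₀ : v ∈ V i₀) (hcard : 2 ≤ #(V i₀)) (hleaf : ∀ i ≠ i₀, 2 ≤ #(V i) → v ∉ V i) :
    IsRootedHypertree (U.erase v) r (fun i => (V i).erase v) where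
  root_mem := mem_erase.mpr ⟨(ne_of_mem_erase hv).symm, h.root_mem⟩
  subset i := erase_subset_erase v (h.subset i)
  sum_card_sub_one := by
    classical
    have hedge : ∀ i, #((V i).erase v) - 1 + (if i = i₀ then 1 else 0) = #(V i) - 1 := by
      intro i
      rw [card_erase_eq_ite]
      split_ifs with hvi hi hi
      · subst hi; omega
      · have : #(V i) < 2 := not_le.mp fun h2 => hleaf i hi h2 hvi
        omega
      · exact absurd (hi ▸ hvi₀) hvi
      · omega
    have hU : 2 ≤ #U := one_lt_card.mpr
      ⟨v, mem_of_mem_erase hv, r, h.root_mem, ne_of_mem_erase hv⟩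
    have := h.sum_card_sub_one
    rw [← sum_congr rfl fun i _ => hedge i, sum_add_distrib, sum_ite_eq', if_pos (mem_univ _)]
      at this
    rw [card_erase_of_mem (mem_of_mem_erase hv)]
    omega
  exists_cuts B hB hne := by
    have hvB : v ∉ B := fun hvB => by simpa using hB hvB
    obtain ⟨B₀, hB₀, hcuts⟩ := exists_cuts_imp_cuts_erase hleaf hvB
    have hBU : B ⊆ U.erase r := hB.trans (erase_subset_erase r (erase_subset v U))
    have hB₀U : B₀ ⊆ U.erase r := by
      rcases hB₀ with rfl | rfl
      exacts [hBU, insert_subset hv hBU]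
    have hB₀ne : B₀.Nonempty := by
      rcases hB₀ with rfl | rfl
      exacts [hne, insert_nonempty v B]
    obtain ⟨i, hi⟩ := h.exists_cuts B₀ hB₀U hB₀ne
    exact ⟨i, hcuts i hi⟩

theorem eq_zero_of_sum_eq_zero {M : Type*} [AddCommMonoid M] (h : IsRootedHypertree U r V)
    (z : J → M) (hz : ∀ B ⊆ U.erase r, {i | Cuts B (V i)}.Subsingleton → ∑ j ∈ B, z j = 0) :
    ∀ v ∈ U.erase r, z v = 0 := by
  induction hn : #U generalizing U V with
  | zero => simp [card_eq_zero.mp hn]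
  | succ k ih =>
    rcases (U.erase r).eq_empty_or_nonempty with hU | hU
    · simp [hU]
    obtain ⟨v, hv, i₀, hvi₀, hcard, hleaf⟩ := h.exists_leaf hU
    have hzv : z v = 0 := by
      refine (sum_singleton z v).symm.trans (hz {v} (singleton_subset_iff.mpr hv) ?_)
      have hcut : ∀ i, Cuts {v} (V i) → i = i₀ := fun i hi => by
        by_contra hne
        obtain ⟨w, hw⟩ := hi.1
        rw [mem_inter, mem_singleton] at hw
        exact hleaf i hne hi.two_le_card (hw.2 ▸ hw.1)
      exact fun i hi j hj => (hcut i hi).trans (hcut j hj).symm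
    have hz' : ∀ B ⊆ (U.erase v).erase r, {i | Cuts B ((V i).erase v)}.Subsingleton →
        ∑ j ∈ B, z j = 0 := by
      intro B hB hsing
      have hvB : v ∉ B := fun hvB => by simpa using hB hvB
      obtain ⟨B₀, hB₀, hcuts⟩ := exists_cuts_imp_cuts_erase hleaf hvB
      have hBU : B ⊆ U.erase r := hB.trans (erase_subset_erase r (erase_subset v U))
      rcases hB₀ with rfl | rfl
      · exact hz B₀ hBU (hsing.anti hcuts)
      · rw [← hz _ (insert_subset hv hBU) (hsing.anti hcuts), sum_insert hvB, hzv, zero_add]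
    have hzU := ih (h.erase_leaf hv hvi₀ hcard hleaf) hz'
      (by rw [card_erase_of_mem (mem_of_mem_erase hv), hn]; rfl)
    intro w hw
    obtain rfl | hwv := eq_or_ne w v
    · exact hzv
    · exact hzU w (mem_erase.mpr ⟨ne_of_mem_erase hw, mem_erase.mpr ⟨hwv, mem_of_mem_erase hw⟩⟩)

end IsRootedHypertree

end Hypertree

lemma mem_Icc_of_mem_sum_convexHull {ι E : Type*} [AddCommGroup E] [Module ℝ E]
    (f : E →ₗ[ℝ] ℝ) (t : Finset ι) (s : ι → Set E) (a b : ι → ℝ)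
    (h : ∀ i ∈ t, ∀ x ∈ s i, f x ∈ Set.Icc (a i) (b i)) :
    ∀ x ∈ ∑ i ∈ t, convexHull ℝ (s i), f x ∈ Set.Icc (∑ i ∈ t, a i) (∑ i ∈ t, b i) := by
  intro x hx
  obtain ⟨g, hg, rfl⟩ := (Set.mem_finsetSum _ _ _).mp hx
  have hgi : ∀ i ∈ t, f (g i) ∈ Set.Icc (a i) (b i) := fun i hi =>
    convexHull_min (h i hi) ((convex_Icc _ _).linear_preimage f) (hg hi)
  rw [map_sum]
  exact ⟨sum_le_sum fun i hi => (hgi i hi).1, sum_le_sum fun i hi => (hgi i hi).2⟩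

lemma abs_sub_lt_of_mem_interior {E : Type*} [NormedAddCommGroup E] [NormedSpace ℝ E]
    [FiniteDimensional ℝ E] {f : E →ₗ[ℝ] ℝ} (hf : f ≠ 0) {P : Set E} {a c : ℝ}
    (hP : ∀ x ∈ P, f x ∈ Set.Icc a (a + c)) {x y : E} (hx : x ∈ interior P)
    (hy : y ∈ interior P) : |f x - f y| < c := by
  have hopen := f.isOpenMap_of_finiteDimensional (f.surjective_of_ne_zero hf)
  have hIoo : ∀ x ∈ interior P, f x ∈ Set.Ioo a (a + c) := fun x hx => by
    rw [← interior_Icc]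
    exact interior_mono (by rintro _ ⟨w, hw, rfl⟩; exact hP w hw)
      (hopen.image_interior_subset P ⟨x, hx, rfl⟩)
  obtain ⟨hx₁, hx₂⟩ := hIoo x hx
  obtain ⟨hy₁, hy₂⟩ := hIoo y hy
  exact abs_sub_lt_iff.mpr ⟨by linarith, by linarith⟩

section LabelFunctional

variable {n : ℕ} {T : Finset (Fin n × Bool)}

lemma sgnVec_dotProduct (p : Fin n × Bool) (x : Fin n → ℝ) :
    sgnVec n p ⬝ᵥ x = if p.2 then x p.1 else -x p.1 := by
  unfold sgnVec
  split_ifs <;> simp [single_dotProduct, neg_dotProduct]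

lemma Adm.injOn_fst (hT : Adm n T) : Set.InjOn Prod.fst (T : Set (Fin n × Bool)) := by
  rintro ⟨i, b⟩ hp ⟨j, c⟩ hq (rfl : i = j)
  cases b <;> cases c
  exacts [rfl, absurd ⟨hq, hp⟩ (hT.2 i), absurd ⟨hp, hq⟩ (hT.2 i), rfl]

lemma AdSn.exists_mem (hT : AdSn n T) (j : Fin n) : ∃ b, (j, b) ∈ T := by
  have himage : T.image Prod.fst = univ :=
    eq_univ_of_card _ (by rw [card_image_of_injOn hT.2.injOn_fst, hT.1, Fintype.card_fin])
  obtain ⟨⟨i, b⟩, hq, rfl⟩ := mem_image.mp (himage ▸ mem_univ j)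
  exact ⟨b, hq⟩

lemma Adm.sgnVec_dotProduct_sgnVec (hT : Adm n T) {p q : Fin n × Bool} (hp : p ∈ T)
    (hq : q ∈ T) : sgnVec n p ⬝ᵥ sgnVec n q = if p = q then 1 else 0 := by
  by_cases hpq : p.1 = q.1
  · obtain rfl := hT.injOn_fst hp hq hpq
    rw [if_pos rfl, sgnVec_dotProduct, sgnVec]
    split_ifs <;> simp
  · rw [sgnVec_dotProduct, sgnVec, if_neg fun h : p = q => hpq (congrArg Prod.fst h)]
    split_ifs <;> simp [hpq]

lemma Adm.vec0_dotProduct_vec0 (hT : Adm n T) {p q : Option (Fin n × Bool)}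
    (hp : p ∈ T.image some) (hq : q ∈ insert none (T.image some)) :
    vec0 n p ⬝ᵥ vec0 n q = if p = q then 1 else 0 := by
  obtain ⟨p, hpT, rfl⟩ := mem_image.mp hp
  rcases mem_insert.mp hq with rfl | hq
  · simp [vec0]
  · obtain ⟨q, hqT, rfl⟩ := mem_image.mp hq
    simp [vec0, hT.sgnVec_dotProduct_sgnVec hpT hqT]

def labelFunctional (n : ℕ) (B : Finset (Option (Fin n × Bool))) : (Fin n → ℝ) →ₗ[ℝ] ℝ :=
  dotProductBilin ℝ ℝ (∑ p ∈ B, vec0 n p)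

lemma labelFunctional_apply (B : Finset (Option (Fin n × Bool))) (x : Fin n → ℝ) :
    labelFunctional n B x = ∑ p ∈ B, vec0 n p ⬝ᵥ x := by
  simp [labelFunctional]

lemma Adm.labelFunctional_vec0 (hT : Adm n T) {B : Finset (Option (Fin n × Bool))}
    (hB : B ⊆ T.image some) {q : Option (Fin n × Bool)} (hq : q ∈ insert none (T.image some)) :
    labelFunctional n B (vec0 n q) = if q ∈ B then 1 else 0 := by
  rw [labelFunctional_apply, sum_congr rfl fun p hp => hT.vec0_dotProduct_vec0 (hB hp) hq,
    sum_ite_eq']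

lemma Adm.labelFunctional_ne_zero (hT : Adm n T) {B : Finset (Option (Fin n × Bool))}
    (hB : B ⊆ T.image some) (hne : B.Nonempty) : labelFunctional n B ≠ 0 := by
  obtain ⟨p, hp⟩ := hne
  intro h
  have := hT.labelFunctional_vec0 hB (mem_insert_of_mem (hB hp))
  simp [h, hp] at this

lemma labelFunctional_intCast_mem_range (B : Finset (Option (Fin n × Bool))) (z : Fin n → ℤ) :
    labelFunctional n B (fun j => (z j : ℝ)) ∈ (Int.castAddHom ℝ).range := by
  rw [labelFunctional_apply]
  refine sum_mem fun p _ => ?_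
  rcases p with _ | q
  · simp [vec0]
  · rw [vec0, sgnVec_dotProduct]
    split_ifs
    exacts [⟨z q.1, by simp⟩, ⟨-z q.1, by simp⟩]

lemma Adm.exists_labelFunctional_mem_Icc (hT : Adm n T) {ι : Type*} [Fintype ι]
    {E : ι → Finset (Option (Fin n × Bool))} (hE : ∀ i, E i ⊆ insert none (T.image some))
    {B : Finset (Option (Fin n × Bool))} (hB : B ⊆ T.image some) :
    ∃ a, ∀ x ∈ ∑ i, convexHull ℝ (vec0 n '' ↑(E i)),
      labelFunctional n B x ∈ Set.Icc a (a + (#{i | Cuts B (E i)} : ℝ)) := by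
  have hvertex : ∀ i ∈ univ, ∀ x ∈ vec0 n '' ↑(E i), labelFunctional n B x ∈
      Set.Icc (if E i ⊆ B then 1 else 0)
        ((if E i ⊆ B then 1 else 0) + if Cuts B (E i) then 1 else 0) := by
    rintro i - _ ⟨q, hq, rfl⟩
    rw [hT.labelFunctional_vec0 hB (hE i hq)]
    have hw : (0 : ℝ) ≤ if Cuts B (E i) then 1 else 0 := by split_ifs <;> norm_num
    by_cases hsub : E i ⊆ B
    · simp [hsub, hsub hq, hw]
    by_cases hqB : q ∈ B
    · have hcut : Cuts B (E i) := ⟨⟨q, mem_inter.mpr ⟨hq, hqB⟩⟩, hsub⟩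
      simp [hsub, hqB, hcut]
    · simp [hsub, hqB, hw]
  refine ⟨#{i | E i ⊆ B}, fun x hx => ?_⟩
  have := mem_Icc_of_mem_sum_convexHull _ _ _ _ _ hvertex x hx
  rwa [sum_add_distrib, sum_boole, sum_boole] at this

lemma Adm.abs_labelFunctional_sub_lt (hT : Adm n T) {ι : Type*} [Fintype ι]
    {E : ι → Finset (Option (Fin n × Bool))} (hE : ∀ i, E i ⊆ insert none (T.image some))
    {B : Finset (Option (Fin n × Bool))} (hB : B ⊆ T.image some) (hne : B.Nonempty)
    {x y : Fin n → ℝ} (hx : x ∈ interior (∑ i, convexHull ℝ (vec0 n '' ↑(E i))))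
    (hy : y ∈ interior (∑ i, convexHull ℝ (vec0 n '' ↑(E i)))) :
    |labelFunctional n B (x - y)| < #{i | Cuts B (E i)} := by
  obtain ⟨a, ha⟩ := hT.exists_labelFunctional_mem_Icc hE hB
  simpa using abs_sub_lt_of_mem_interior (hT.labelFunctional_ne_zero hB hne) ha hx hy

lemma AdSn.isRootedHypertree (hT : AdSn n T) {ι : Type*} [Fintype ι]
    {E : ι → Finset (Option (Fin n × Bool))} (hE : ∀ i, E i ⊆ insert none (T.image some))
    (hcard : ∑ i, (#(E i) - 1) = n) {x : Fin n → ℝ}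
    (hx : x ∈ interior (∑ i, convexHull ℝ (vec0 n '' ↑(E i)))) :
    IsRootedHypertree (insert none (T.image some)) none E where
  root_mem := mem_insert_self _ _
  subset := hE
  sum_card_sub_one := by
    rw [hcard, card_insert_of_notMem (by simp), card_image_of_injective _ (Option.some_injective _),
      hT.1, Nat.add_sub_cancel]
  exists_cuts B hB hne := by
    rw [erase_insert (by simp)] at hB
    by_contra! hno
    simpa [hno] using hT.2.abs_labelFunctional_sub_lt hE hB hne hx hx

lemma Adm.labelFunctional_intCast_eq_zero (hT : Adm n T) {ι : Type*} [Fintype ι]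
    {E : ι → Finset (Option (Fin n × Bool))} (hE : ∀ i, E i ⊆ insert none (T.image some))
    {B : Finset (Option (Fin n × Bool))} (hB : B ⊆ T.image some)
    (hcuts : {i | Cuts B (E i)}.Subsingleton) {x : Fin n → ℝ} {z : Fin n → ℤ}
    (hx : x ∈ interior (∑ i, convexHull ℝ (vec0 n '' ↑(E i))))
    (hy : x - (fun j => (z j : ℝ)) ∈ interior (∑ i, convexHull ℝ (vec0 n '' ↑(E i)))) :
    labelFunctional n B (fun j => (z j : ℝ)) = 0 := by
  rcases B.eq_empty_or_nonempty with rfl | hne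
  · simp [labelFunctional_apply]
  obtain ⟨k, hk⟩ := labelFunctional_intCast_mem_range B z
  have hcard : #{i | Cuts B (E i)} ≤ 1 :=
    card_le_one.mpr fun i hi j hj => hcuts (mem_filter.mp hi).2 (mem_filter.mp hj).2
  have hlt : |(k : ℝ)| < 1 := by
    rw [show (k : ℝ) = _ from hk]
    simpa using (hT.abs_labelFunctional_sub_lt hE hB hne hx hy).trans_le (by exact_mod_cast hcard)
  have hk0 : k = 0 := Int.abs_lt_one_iff.mp (by exact_mod_cast hlt)
  rw [← hk, hk0, map_zero]

lemma AdSn.eq_zero_of_forall_sgnVec_dotProduct_eq_zero (hT : AdSn n T) {x : Fin n → ℝ}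
    (h : ∀ q ∈ T, sgnVec n q ⬝ᵥ x = 0) : x = 0 := by
  funext j
  obtain ⟨b, hb⟩ := hT.exists_mem j
  have := h _ hb
  rw [sgnVec_dotProduct] at this
  cases b <;> simpa using this

end LabelFunctional

theorem stmt5_general (n m : ℕ) (S : Fin m → Finset (Fin n × Bool))
    (T : Finset (Fin n × Bool)) (hT : AdSn n T)
    (E : Fin m → Finset (Option (Fin n × Bool)))
    (hE2 : ∀ i, E i ⊆ insert none ((S i ∩ T).image some))
    (hE3 : (∑ i, ((E i).card - 1)) = n)
    (Pcell : Set (Fin n → ℝ))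
    (hPcell : Pcell = ∑ i : Fin m, convexHull ℝ (vec0 n '' ↑(E i)))
    (z : Fin n → ℤ) (hz : z ≠ 0) :
    Disjoint (interior Pcell) (interior ((fun j => (z j : ℝ)) +ᵥ Pcell)) := by
  subst hPcell
  have hE : ∀ i, E i ⊆ insert none (T.image some) := fun i =>
    (hE2 i).trans (insert_subset_insert _ (image_subset_image inter_subset_right))
  rw [Set.disjoint_left]
  intro x hx hx'
  have hy : x - (fun j => (z j : ℝ)) ∈ interior (∑ i, convexHull ℝ (vec0 n '' ↑(E i))) := by
    rw [interior_vadd] at hx'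
    obtain ⟨y, hy, rfl⟩ := hx'
    simpa using hy
  have hsums := (hT.isRootedHypertree hE hE3 hx).eq_zero_of_sum_eq_zero
    (fun p => vec0 n p ⬝ᵥ fun j => (z j : ℝ)) fun B hB hcuts => by
      rw [erase_insert (by simp)] at hB
      rw [← labelFunctional_apply, hT.2.labelFunctional_intCast_eq_zero hE hB hcuts hx hy]
  refine hz (funext fun j => ?_)
  have hzR := hT.eq_zero_of_forall_sgnVec_dotProduct_eq_zero fun q hq =>
    hsums (some q) (by simpa using hq)
  simpa using congrFun hzR j

/-- Let `P_T = Δ⁰_{S_1∩T} + ⋯ + Δ⁰_{S_m∩T}` be `n`-dimensional, where the `S_i`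
are admissible and `T ∈ AdS_n`. If `Π = conv(E_1) + ⋯ + conv(E_m)` is a fine mixed cell of
`P_T` (each `E_i` a nonempty subset of `{0} ∪ (S_i ∩ T)`, `Σ(|E_i| − 1) = n`, `Π`
`n`-dimensional), then for every nonzero integer vector `z`, the interiors of `Π` and `z + Π`
are disjoint. -/
theorem stmt5 (n m : ℕ) (S : Fin m → Finset (Fin n × Bool)) (hS : ∀ i, Adm n (S i))
    (T : Finset (Fin n × Bool)) (hT : AdSn n T)
    (hPdim : affineSpan ℝ (∑ i : Fin m, simp0 n (S i ∩ T)) = ⊤)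
    (E : Fin m → Finset (Option (Fin n × Bool)))
    (hE1 : ∀ i, (E i).Nonempty)
    (hE2 : ∀ i, E i ⊆ insert none ((S i ∩ T).image some))
    (hE3 : (∑ i, ((E i).card - 1)) = n)
    (Pcell : Set (Fin n → ℝ))
    (hPcell : Pcell = ∑ i : Fin m, convexHull ℝ (vec0 n '' ↑(E i)))
    (hdim : affineSpan ℝ Pcell = ⊤)
    (z : Fin n → ℤ) (hz : z ≠ 0) :
    Disjoint (interior Pcell) (interior ((fun j => (z j : ℝ)) +ᵥ Pcell)) :=
  stmt5_general n m S T hT E hE2 hE3 Pcell hPcell z hz
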